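/- arXiv:2010.04952 — 4 statements merged into one kernel-verified Lean document; each statement's English description precedes it below -/
import Mathlib

section
/- For any unbounded set X ⊆ ℝⁿ and any R > 0, the tangent cone at infinity satisfies C∞X × {0} = cl(A_R) ∩ (ℝⁿ × {0}), where A_R := {(t·x, t) : x ∈ X, ‖x‖ ≥ R, t ∈ (0,∞)}. -/
open Filter Topology

noncomputable section

/-- The tangent cone at infinity (asymptotic cone) of a set `X ⊆ ℝⁿ`. -/
def coneAtInfty {n : ℕ} (X : Set (EuclideanSpace ℝ (Fin n))) :
    Set (EuclideanSpace ℝ (Fin n)) :=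
  {v | ∃ (x : ℕ → EuclideanSpace ℝ (Fin n)) (t : ℕ → ℝ),
    (∀ k, x k ∈ X) ∧ (∀ k, 0 < t k) ∧
    Tendsto (fun k => ‖x k‖) atTop atTop ∧
    Tendsto (fun k => t k • x k) atTop (𝓝 v)}

/-! If `tₖ xₖ → v` with `‖xₖ‖ → ∞`, then `|tₖ| = ‖tₖ xₖ‖ / ‖xₖ‖ → 0` and eventually `‖xₖ‖ ≥ R`,
so `(v, 0)` is a limit of points `(tₖ xₖ, tₖ)` of `A_R`. Conversely, if `(tₖ xₖ, tₖ) → (v, 0)` with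
`v ≠ 0`, then `‖xₖ‖ = ‖tₖ xₖ‖ / |tₖ| → ∞`; and `0` lies in the cone of every unbounded set, as the
limit of `‖xₖ‖⁻² xₖ`. -/

section NormedSpace

variable {E : Type*} [NormedAddCommGroup E] [NormedSpace ℝ E] {x : ℕ → E} {t : ℕ → ℝ} {v : E}

lemma tendsto_nhds_zero_of_tendsto_smul_of_tendsto_norm_atTop
    (hx : Tendsto (fun k => ‖x k‖) atTop atTop)
    (hv : Tendsto (fun k => t k • x k) atTop (𝓝 v)) :
    Tendsto t atTop (𝓝 0) := by
  rw [tendsto_zero_iff_norm_tendsto_zero]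
  have hlim : Tendsto (fun k => ‖t k • x k‖ * ‖x k‖⁻¹) atTop (𝓝 0) := by
    simpa using hv.norm.mul hx.inv_tendsto_atTop
  refine hlim.congr' ?_
  filter_upwards [hx.eventually_gt_atTop 0] with k hk
  rw [norm_smul, mul_inv_cancel_right₀ hk.ne']

lemma tendsto_norm_atTop_of_tendsto_smul_of_tendsto_nhds_zero (ht : Tendsto t atTop (𝓝 0))
    (hv : v ≠ 0) (htx : Tendsto (fun k => t k • x k) atTop (𝓝 v)) :
    Tendsto (fun k => ‖x k‖) atTop atTop := by
  have hne : ∀ᶠ k in atTop, t k ≠ 0 ∧ x k ≠ 0 :=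
    (htx.eventually_ne hv).mono fun k hk => smul_ne_zero_iff.mp hk
  have hinv : Tendsto (fun k => ‖t k‖⁻¹) atTop atTop := by
    refine Tendsto.inv_tendsto_nhdsGT_zero (tendsto_nhdsWithin_iff.mpr ⟨?_, ?_⟩)
    · simpa using ht.norm
    · exact hne.mono fun k hk => norm_pos_iff.mpr hk.1
  refine (hinv.atTop_mul_pos (norm_pos_iff.mpr hv) htx.norm).congr' ?_
  filter_upwards [hne] with k hk
  rw [norm_smul, inv_mul_cancel_left₀ (norm_ne_zero_iff.mpr hk.1)]

end NormedSpace

lemma zero_mem_coneAtInfty {n : ℕ} {X : Set (EuclideanSpace ℝ (Fin n))}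
    (hX : ∀ R : ℝ, ∃ x ∈ X, R < ‖x‖) : 0 ∈ coneAtInfty X := by
  choose x hxX hx using fun k : ℕ => hX k
  have hpos (k : ℕ) : 0 < ‖x k‖ := (Nat.cast_nonneg k).trans_lt (hx k)
  have hxn : Tendsto (fun k => ‖x k‖) atTop atTop :=
    tendsto_atTop_mono (fun k => (hx k).le) tendsto_natCast_atTop_atTop
  refine ⟨x, fun k => (‖x k‖ ^ 2)⁻¹, hxX, fun k => by have := hpos k; positivity, hxn, ?_⟩
  rw [tendsto_zero_iff_norm_tendsto_zero]
  refine hxn.inv_tendsto_atTop.congr fun k => ?_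
  rw [Pi.inv_apply, norm_smul, norm_inv, norm_pow, Real.norm_eq_abs, abs_norm, sq, mul_inv,
    inv_mul_cancel_right₀ (hpos k).ne']

theorem coneAtInfty_eq_closure_slice_general {n : ℕ} (X : Set (EuclideanSpace ℝ (Fin n)))
    (hX : ∀ R' : ℝ, ∃ x ∈ X, R' < ‖x‖) (R : ℝ) :
    (coneAtInfty X) ×ˢ ({0} : Set ℝ) =
      closure {p : EuclideanSpace ℝ (Fin n) × ℝ |
          ∃ x ∈ X, ∃ t : ℝ, 0 < t ∧ R ≤ ‖x‖ ∧ p = (t • x, t)} ∩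
        {p : EuclideanSpace ℝ (Fin n) × ℝ | p.2 = 0} := by
  ext ⟨v, s⟩
  simp only [Set.mem_prod, Set.mem_singleton_iff, Set.mem_inter_iff, Set.mem_ofPred_eq]
  constructor
  · rintro ⟨⟨x, t, hxX, ht, hx, htx⟩, rfl⟩
    have ht0 := tendsto_nhds_zero_of_tendsto_smul_of_tendsto_norm_atTop hx htx
    refine ⟨mem_closure_of_tendsto (htx.prodMk_nhds ht0) ?_, rfl⟩
    filter_upwards [hx.eventually_ge_atTop R] with k hk using ⟨x k, hxX k, t k, ht k, hk, rfl⟩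
  · rintro ⟨hcl, rfl⟩
    refine ⟨?_, rfl⟩
    obtain ⟨p, hpA, hp⟩ := mem_closure_iff_seq_limit.mp hcl
    choose x hxX t ht _ hpx using hpA
    obtain ⟨htx, ht0⟩ : Tendsto (fun k => t k • x k) atTop (𝓝 v) ∧ Tendsto t atTop (𝓝 0) := by
      simpa [hpx, Prod.tendsto_iff] using hp
    rcases eq_or_ne v 0 with rfl | hv
    · exact zero_mem_coneAtInfty hX
    · exact ⟨x, t, hxX, ht, tendsto_norm_atTop_of_tendsto_smul_of_tendsto_nhds_zero ht0 hv htx, htx⟩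

theorem coneAtInfty_eq_closure_slice {n : ℕ} (X : Set (EuclideanSpace ℝ (Fin n)))
    (hX : ∀ R' : ℝ, ∃ x ∈ X, R' < ‖x‖) (R : ℝ) (hR : 0 < R) :
    (coneAtInfty X) ×ˢ ({0} : Set ℝ) =
      closure {p : EuclideanSpace ℝ (Fin n) × ℝ |
          ∃ x ∈ X, ∃ t : ℝ, 0 < t ∧ R ≤ ‖x‖ ∧ p = (t • x, t)} ∩
        {p : EuclideanSpace ℝ (Fin n) × ℝ | p.2 = 0} :=
  coneAtInfty_eq_closure_slice_general X hX R
end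
end

section
/- Let X ⊆ ℝⁿ be a closed set and F : ℝⁿ → ℝᵐ a linear map. If ker F ∩ (C∞X ∩ Sⁿ⁻¹) = ∅, then F(X) is closed in ℝᵐ. -/
open Filter Topology

noncomputable section

/-!
Let `x k ∈ X` with `F (x k) → y`. If `(x k)` has a bounded subsequence, a limit point of it lies
in `X` and is mapped to `y`. Otherwise `‖x k‖ → ∞`, and a limit point `v` of `x k / ‖x k‖` is a
unit vector of `coneAtInfty X` with `F v = lim F (x k) / ‖x k‖ = 0`, which the hypothesis excludes.
-/

theorem isClosed_image_of_forall_not_tendsto_norm {E F : Type*} [SeminormedAddCommGroup E]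
    [ProperSpace E] [TopologicalSpace F] [SequentialSpace F] [T2Space F] {f : E → F} {X : Set E}
    (hX : IsClosed X) (hf : Continuous f)
    (h : ∀ x : ℕ → E, (∀ k, x k ∈ X) → (∃ y, Tendsto (f ∘ x) atTop (𝓝 y)) →
      ¬Tendsto (fun k => ‖x k‖) atTop atTop) :
    IsClosed (f '' X) := by
  rw [← isSeqClosed_iff_isClosed]
  intro u y hu hy
  choose x hxX hxu using hu
  obtain rfl : u = f ∘ x := funext fun k => (hxu k).symm
  obtain ⟨C, hC⟩ : ∃ C, ∃ᶠ k in atTop, ‖x k‖ < C := by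
    simpa [tendsto_atTop, not_le, frequently_atTop] using h x hxX ⟨y, hy⟩
  obtain ⟨φ, hφ, hφC⟩ := extraction_of_frequently_atTop hC
  obtain ⟨a, -, ψ, hψ, ha⟩ := (isCompact_closedBall (0 : E) C).tendsto_subseq
    (x := x ∘ φ) fun k => mem_closedBall_zero_iff.2 (hφC k).le
  have hφψ : Tendsto (φ ∘ ψ) atTop atTop := (hφ.comp hψ).tendsto_atTop
  exact ⟨a, hX.isSeqClosed (fun k => hxX _) ha,
    tendsto_nhds_unique ((hf.tendsto a).comp ha) (hy.comp hφψ)⟩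

theorem map_eq_zero_of_tendsto_normalize {E F : Type*} [SeminormedAddCommGroup E]
    [NormedSpace ℝ E] [NormedAddCommGroup F] [NormedSpace ℝ F] {f : E →ₗ[ℝ] F}
    (hf : Continuous f) {x : ℕ → E} {y : F} {v : E}
    (hx : Tendsto (fun k => ‖x k‖) atTop atTop) (hy : Tendsto (fun k => f (x k)) atTop (𝓝 y))
    (hv : Tendsto (fun k => ‖x k‖⁻¹ • x k) atTop (𝓝 v)) :
    f v = 0 := by
  have h0 : Tendsto (fun k => ‖x k‖⁻¹ • f (x k)) atTop (𝓝 0) := by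
    simpa using (tendsto_inv_atTop_zero.comp hx).smul hy
  simp_rw [← map_smul] at h0
  exact tendsto_nhds_unique ((hf.tendsto v).comp hv) h0

theorem mem_coneAtInfty_of_tendsto_normalize {n : ℕ} {X : Set (EuclideanSpace ℝ (Fin n))}
    {x : ℕ → EuclideanSpace ℝ (Fin n)} {v : EuclideanSpace ℝ (Fin n)} (hxX : ∀ k, x k ∈ X)
    (hx : Tendsto (fun k => ‖x k‖) atTop atTop)
    (hv : Tendsto (fun k => ‖x k‖⁻¹ • x k) atTop (𝓝 v)) :
    v ∈ coneAtInfty X := by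
  -- `coneAtInfty` asks for `0 < t k` at every `k`, so drop the first terms, where `x k` may vanish
  obtain ⟨N, hN⟩ := eventually_atTop.1 (hx.eventually_gt_atTop 0)
  refine ⟨fun k => x (k + N), fun k => ‖x (k + N)‖⁻¹, fun k => hxX _,
    fun k => inv_pos.2 (hN _ (Nat.le_add_left _ _)), ?_, ?_⟩
  · exact (tendsto_add_atTop_iff_nat N).2 hx
  · exact (tendsto_add_atTop_iff_nat N).2 hv

theorem exists_mem_coneAtInfty_sphere {n : ℕ} {X : Set (EuclideanSpace ℝ (Fin n))}
    {x : ℕ → EuclideanSpace ℝ (Fin n)} (hxX : ∀ k, x k ∈ X)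
    (hx : Tendsto (fun k => ‖x k‖) atTop atTop) :
    ∃ v ∈ coneAtInfty X ∩ Metric.sphere 0 1, ∃ φ : ℕ → ℕ, StrictMono φ ∧
      Tendsto (fun k => ‖x (φ k)‖⁻¹ • x (φ k)) atTop (𝓝 v) := by
  have hS : ∀ᶠ k in atTop, ‖x k‖⁻¹ • x k ∈ Metric.sphere (0 : EuclideanSpace ℝ (Fin n)) 1 :=
    (hx.eventually_gt_atTop 0).mono fun k hk => by simp [norm_smul, hk.ne']
  obtain ⟨v, hvS, φ, hφ, hφv⟩ := (isCompact_sphere _ _).tendsto_subseq' hS.frequently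
  exact ⟨v, ⟨mem_coneAtInfty_of_tendsto_normalize (fun k => hxX _)
    (hx.comp hφ.tendsto_atTop) hφv, hvS⟩, φ, hφ, hφv⟩

theorem closed_image_of_ker_disjoint {n m : ℕ} (X : Set (EuclideanSpace ℝ (Fin n)))
    (hX : IsClosed X)
    (F : EuclideanSpace ℝ (Fin n) →ₗ[ℝ] EuclideanSpace ℝ (Fin m))
    (hker : (LinearMap.ker F : Set (EuclideanSpace ℝ (Fin n))) ∩
      (coneAtInfty X ∩ Metric.sphere 0 1) = ∅) :
    IsClosed (F '' X) := by
  refine isClosed_image_of_forall_not_tendsto_norm hX F.continuous_of_finiteDimensional ?_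
  rintro x hxX ⟨y, hy⟩ hx
  obtain ⟨v, hv, φ, hφ, hφv⟩ := exists_mem_coneAtInfty_sphere hxX hx
  have hFv : F v = 0 := map_eq_zero_of_tendsto_normalize F.continuous_of_finiteDimensional
    (hx.comp hφ.tendsto_atTop) (hy.comp hφ.tendsto_atTop) hφv
  exact hker.subset ⟨hFv, hv⟩
end
end

section
/- Let X ⊆ ℝⁿ be closed and F : ℝⁿ → ℝᵐ linear. If every sequence xᵏ ∈ X with ‖xᵏ‖ → ∞ and xᵏ/‖xᵏ‖ converging to some u satisfies F(u) ≠ 0, then for every y in the closure of F(X) there exists x ∈ X with F(x) = y. -/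
open Filter Topology

noncomputable section

set_option maxHeartbeats 1000000 in
theorem mem_image_of_mem_closure {n m : ℕ} (X : Set (EuclideanSpace ℝ (Fin n)))
    (hX : IsClosed X)
    (F : EuclideanSpace ℝ (Fin n) →ₗ[ℝ] EuclideanSpace ℝ (Fin m))
    (hseq : ∀ (x : ℕ → EuclideanSpace ℝ (Fin n)) (u : EuclideanSpace ℝ (Fin n)),
      (∀ k, x k ∈ X) → Tendsto (fun k => ‖x k‖) atTop atTop →
      Tendsto (fun k => ‖x k‖⁻¹ • x k) atTop (𝓝 u) → F u ≠ 0)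
    (y : EuclideanSpace ℝ (Fin m)) (hy : y ∈ closure (F '' X)) :
    ∃ x ∈ X, F x = y := by
  have hFc : Continuous F := F.continuous_of_finiteDimensional
  -- get a sequence in F '' X converging to y
  obtain ⟨z, hzmem, hz⟩ := mem_closure_iff_seq_limit.1 hy
  choose x hxX hFx using hzmem
  have hFxy : Tendsto (fun k => F (x k)) atTop (𝓝 y) := by
    simpa only [hFx] using hz
  by_cases hb : ∃ M : ℝ, ∀ᶠ k in atTop, ‖x k‖ ≤ M
  · -- bounded case
    obtain ⟨M, hM⟩ := hb
    obtain ⟨k₀, hk₀⟩ := eventually_atTop.1 hM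
    have hball : ∀ k, x (k + k₀) ∈ Metric.closedBall (0 : EuclideanSpace ℝ (Fin n)) M := by
      intro k
      simpa [Metric.mem_closedBall, dist_eq_norm] using hk₀ (k + k₀) (Nat.le_add_left _ _)
    obtain ⟨x₀, -, φ, hφ, hlim⟩ :=
      (isCompact_closedBall (0 : EuclideanSpace ℝ (Fin n)) M).tendsto_subseq hball
    have htend : Tendsto (fun k => φ k + k₀) atTop atTop :=
      (tendsto_add_atTop_nat k₀).comp hφ.tendsto_atTop
    have hx₀X : x₀ ∈ X :=
      hX.mem_of_tendsto hlim (Eventually.of_forall fun k => hxX _)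
    refine ⟨x₀, hx₀X, ?_⟩
    have h1 : Tendsto (fun k => F (x (φ k + k₀))) atTop (𝓝 (F x₀)) :=
      (hFc.tendsto x₀).comp hlim
    have h2 : Tendsto (fun k => F (x (φ k + k₀))) atTop (𝓝 y) :=
      hFxy.comp htend
    exact tendsto_nhds_unique h1 h2
  · -- unbounded case: derive a contradiction with hseq
    exfalso
    rw [not_exists] at hb
    have hfreq : ∀ N : ℕ, ∃ᶠ k in atTop, (N : ℝ) < ‖x k‖ := by
      intro N
      have := hb N
      rw [Filter.not_eventually] at this
      exact this.mono fun k hk => lt_of_not_ge hk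
    obtain ⟨ψ, hψmono, hψ⟩ := Filter.extraction_forall_of_frequently hfreq
    set zz : ℕ → EuclideanSpace ℝ (Fin n) := fun k => x (ψ k) with hzz
    have hnormpos : ∀ k, 0 < ‖zz k‖ := fun k =>
      lt_of_le_of_lt (Nat.cast_nonneg k) (hψ k)
    have hnorm_atTop : Tendsto (fun k => ‖zz k‖) atTop atTop :=
      tendsto_atTop_mono (fun k => (hψ k).le) tendsto_natCast_atTop_atTop
    set u : ℕ → EuclideanSpace ℝ (Fin n) := fun k => ‖zz k‖⁻¹ • zz k with hu
    have husphere : ∀ k, u k ∈ Metric.sphere (0 : EuclideanSpace ℝ (Fin n)) 1 := by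
      intro k
      simp only [Metric.mem_sphere, dist_eq_norm, sub_zero, hu, norm_smul,
        norm_inv, norm_norm]
      exact inv_mul_cancel₀ (hnormpos k).ne'
    obtain ⟨uinf, -, φ, hφ, hulim⟩ :=
      (isCompact_sphere (0 : EuclideanSpace ℝ (Fin n)) 1).tendsto_subseq husphere
    have hmemX : ∀ k, zz (φ k) ∈ X := fun k => hxX _
    have hnorm2 : Tendsto (fun k => ‖zz (φ k)‖) atTop atTop :=
      hnorm_atTop.comp hφ.tendsto_atTop
    have hulim' : Tendsto (fun k => ‖zz (φ k)‖⁻¹ • zz (φ k)) atTop (𝓝 uinf) := hulim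
    have hFu : F uinf ≠ 0 := hseq (fun k => zz (φ k)) uinf hmemX hnorm2 hulim'
    apply hFu
    -- F (u k) = ‖zz k‖⁻¹ • F (zz k) → 0 • y = 0
    have hinv : Tendsto (fun k => ‖zz (φ k)‖⁻¹) atTop (𝓝 0) :=
      hnorm2.inv_tendsto_atTop
    have hFzz : Tendsto (fun k => F (zz (φ k))) atTop (𝓝 y) :=
      hFxy.comp ((hψmono.comp hφ).tendsto_atTop)
    have h0 : Tendsto (fun k => F (u (φ k))) atTop (𝓝 (0 : EuclideanSpace ℝ (Fin m))) := by
      have := hinv.smul hFzz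
      rw [zero_smul] at this
      simpa only [hu, map_smul] using this
    have h1 : Tendsto (fun k => F (u (φ k))) atTop (𝓝 (F uinf)) :=
      (hFc.tendsto uinf).comp hulim
    exact tendsto_nhds_unique h1 h0
end
end

section
/- Let X ⊆ ℝⁿ be a closed set with nonempty interior, F : ℝⁿ → ℝᵐ a surjective linear map, and suppose F(∂X) is closed, where ∂X = X \ int(X). Then F(X) is closed. -/
open Filter Topology

noncomputable section

theorem closed_image_of_frontier_closed {n m : ℕ}
    (X : Set (EuclideanSpace ℝ (Fin n))) (hX : IsClosed X)
    (hint : (interior X).Nonempty)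
    (F : EuclideanSpace ℝ (Fin n) →ₗ[ℝ] EuclideanSpace ℝ (Fin m))
    (hF : Function.Surjective F)
    (hfr : IsClosed (F '' (X \ interior X))) :
    IsClosed (F '' X) := by
  obtain ⟨G, hG⟩ := F.exists_rightInverse_of_surjective (LinearMap.range_eq_top.mpr hF)
  have hGF : ∀ y, F (G y) = y := fun y => congrFun (congrArg DFunLike.coe hG) y
  have hGc : Continuous G := G.continuous_of_finiteDimensional
  -- Key: if y ∈ F '' X but y ∉ F '' (X \ interior X), then G y ∈ X.
  have key : ∀ y ∈ F '' X \ F '' (X \ interior X), G y ∈ X := by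
    rintro y ⟨⟨x, hxX, rfl⟩, hy⟩
    by_contra hGy
    -- the segment from x to G (F x) lies in the fiber of F x
    have hseg : ∃ p ∈ segment ℝ x (G (F x)), p ∈ X \ interior X := by
      by_contra hno
      push_neg at hno
      have hsub : segment ℝ x (G (F x)) ⊆ interior X ∪ Xᶜ := by
        intro p hp
        by_cases hpX : p ∈ X
        · left
          by_contra hpint
          exact hno p hp ⟨hpX, hpint⟩
        · exact Or.inr hpX
      have hdisj : Disjoint (interior X) Xᶜ :=
        Set.disjoint_compl_right_iff_subset.mpr interior_subset
      rcases ((convex_segment x (G (F x))).isPreconnected).subset_or_subset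
          isOpen_interior hX.isOpen_compl hdisj hsub with h | h
      · exact hGy (interior_subset (h (right_mem_segment ℝ x (G (F x)))))
      · exact (h (left_mem_segment ℝ x (G (F x)))) hxX
    obtain ⟨p, hp, hpfr⟩ := hseg
    apply hy
    refine ⟨p, hpfr, ?_⟩
    obtain ⟨a, b, ha, hb, hab, rfl⟩ := hp
    simp only [map_add, map_smul, hGF]
    rw [← add_smul, hab, one_smul]
  -- Now prove closedness via closure.
  rw [← closure_subset_iff_isClosed]
  intro y hy
  by_cases hyfr : y ∈ F '' (X \ interior X)
  · exact Set.image_mono Set.diff_subset hyfr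
  · have hU : IsOpen (F '' (X \ interior X))ᶜ := hfr.isOpen_compl
    have hy' : y ∈ closure (F '' X \ F '' (X \ interior X)) := by
      have := hU.inter_closure (t := F '' X) ⟨hyfr, hy⟩
      rwa [Set.inter_comm, ← Set.diff_eq] at this
    have : G y ∈ closure X := by
      have h1 : G y ∈ G '' closure (F '' X \ F '' (X \ interior X)) :=
        ⟨y, hy', rfl⟩
      have h2 := (image_closure_subset_closure_image hGc) h1
      refine closure_mono ?_ h2
      rintro z ⟨w, hw, rfl⟩
      exact key w hw
    rw [hX.closure_eq] at this
    exact ⟨G y, this, hGF y⟩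
end
end
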